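/- Let α_3, β_3 > 0 be real numbers, let 0 < δ ≤ 1/2, and let k ≥ 1 be an integer with k ≥ log(2 α_3 / δ) / (2 β_3), so that α_3 e^{−2 β_3 k} ≤ δ/2. Let p̃, p, P_A, P_B be real numbers with |p| ≤ 1, P_A ≥ 2^{−2k}, P_B ≥ 2^{−2k}, and | p/(P_A P_B) − p̃ | ≤ α_3 e^{−2 β_3 k}. Let M be a real number with M ≥ 27 · 2^{11k+11} / δ², and let X, Y_A, Y_B be mutually independent real-valued random variables satisfying, for every α > 0, Pr( |X − p| ≥ α ) ≤ 27 · 2^{2k}/(α² M), Pr( |Y_A/P_A − 1| ≥ α ) ≤ 27 · 2^{3k}/(α² M), and Pr( |Y_B/P_B − 1| ≥ α ) ≤ 27 · 2^{3k}/(α² M). Then the random variable S = X/(Y_A Y_B) satisfies Pr( |S − p̃| ≥ δ ) ≤ 81 · 2^{11k+11} / (M δ²). -/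

import Mathlib

/-!
Off the three events `|X - p| ≥ t`, `|Y_A / P_A - 1| ≥ t`, `|Y_B / P_B - 1| ≥ t`, with
`t = 2^{-4k} δ / 32`, the ratio `X / (Y_A Y_B)` lies within `δ / 2` of `p / (P_A P_B)`, because
`P_A P_B ≥ 2^{-4k}` keeps the denominator away from zero. That value lies within
`α₃ e^{-2β₃k} ≤ δ / 2` of `p̃`. A union bound over the three events, each controlled by its tail
estimate at `α = t`, gives the claim.
-/

open MeasureTheory ProbabilityTheory

lemma mul_exp_neg_le_of_log_div_le {a c y : ℝ} (ha : 0 < a) (hc : 0 < c)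
    (h : Real.log (a / c) ≤ y) : a * Real.exp (-y) ≤ c := by
  have hexp : a ≤ c * Real.exp y := by
    rw [Real.log_le_iff_le_exp (by positivity), div_le_iff₀ hc] at h
    linarith
  calc a * Real.exp (-y) ≤ c * Real.exp y * Real.exp (-y) := by gcongr
    _ = c := by rw [mul_assoc, ← Real.exp_add, add_neg_cancel, Real.exp_zero, mul_one]

lemma abs_mul_sub_one_lt {a b t : ℝ} (ht : t ≤ 1) (ha : |a - 1| < t) (hb : |b - 1| < t) :
    |a * b - 1| < 3 * t := by
  rw [abs_lt] at ha hb ⊢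
  constructor <;> nlinarith

lemma abs_div_mul_mul_sub_div_lt {x p a b D ε t : ℝ} (hp : |p| ≤ 1) (hD : 0 < D)
    (ht : t ≤ 1 / 4) (hx : |x - p| < ε) (ha : |a - 1| < t) (hb : |b - 1| < t) :
    |x / (a * b * D) - p / D| < 16 * (ε + 3 * t) / (9 * D) := by
  have hab : 9 / 16 ≤ a * b := by
    rw [abs_lt] at ha hb
    nlinarith
  have hab0 : 0 < a * b := by linarith
  have hperturb : |p| * |a * b - 1| ≤ 3 * t := by
    have := abs_mul_sub_one_lt (by linarith) ha hb
    calc |p| * |a * b - 1| ≤ 1 * (3 * t) := by gcongr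
      _ = 3 * t := one_mul _
  have hnum : |x - p * (a * b)| < ε + 3 * t :=
    calc |x - p * (a * b)| = |(x - p) - p * (a * b - 1)| := by ring_nf
      _ ≤ |x - p| + |p| * |a * b - 1| := by rw [← abs_mul]; exact abs_sub _ _
      _ < ε + 3 * t := by linarith
  have hdiff : x / (a * b * D) - p / D = (x - p * (a * b)) / (a * b * D) := by
    rw [sub_div, mul_comm p, mul_div_mul_left _ _ hab0.ne']
  have hε : 0 < ε + 3 * t := (abs_nonneg _).trans_lt hnum
  rw [hdiff, abs_div, abs_of_pos (show 0 < a * b * D by positivity)]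
  calc |x - p * (a * b)| / (a * b * D) < (ε + 3 * t) / (a * b * D) := by gcongr
    _ ≤ (ε + 3 * t) / (9 / 16 * D) := by gcongr
    _ = 16 * (ε + 3 * t) / (9 * D) := by field_simp

lemma abs_div_mul_sub_lt_of_abs_sub_lt {x yA yB p PA PB q cA cB δ : ℝ} (hp : |p| ≤ 1)
    (hcA : 0 < cA) (hcB : 0 < cB) (hPA : cA ≤ PA) (hPB : cB ≤ PB) (hcδ : cA * cB * δ ≤ 8)
    (hq : |p / (PA * PB) - q| ≤ δ / 2) (hx : |x - p| < cA * cB * δ / 32)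
    (ha : |yA / PA - 1| < cA * cB * δ / 32) (hb : |yB / PB - 1| < cA * cB * δ / 32) :
    |x / (yA * yB) - q| < δ := by
  have hPA0 : 0 < PA := hcA.trans_le hPA
  have hPB0 : 0 < PB := hcB.trans_le hPB
  have hδ : 0 < δ := by
    have : 0 < cA * cB * δ := by linarith [abs_nonneg (x - p)]
    exact pos_of_mul_pos_right this (by positivity)
  have hy : yA * yB = yA / PA * (yB / PB) * (PA * PB) := by field_simp
  have hratio := abs_div_mul_mul_sub_div_lt hp (mul_pos hPA0 hPB0) (by linarith) hx ha hb
  rw [← hy] at hratio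
  have hsmall : 16 * (cA * cB * δ / 32 + 3 * (cA * cB * δ / 32)) / (9 * (PA * PB)) ≤ δ / 2 := by
    rw [div_le_iff₀ (by positivity)]
    have : cA * cB ≤ PA * PB := mul_le_mul hPA hPB hcB.le hPA0.le
    nlinarith [mul_le_mul_of_nonneg_left this hδ.le, mul_pos (mul_pos hcA hcB) hδ]
  calc |x / (yA * yB) - q| ≤ |x / (yA * yB) - p / (PA * PB)| + |p / (PA * PB) - q| :=
        abs_sub_le _ _ _
    _ < δ / 2 + δ / 2 := by linarith
    _ = δ := by ring

lemma tail_bound_at_threshold_le {M δ : ℝ} {j k : ℕ} (hM : 0 < M) (hδ : 0 < δ) (hj : j ≤ 3 * k) :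
    27 * (2:ℝ) ^ j / (((2 ^ (2 * k))⁻¹ * (2 ^ (2 * k))⁻¹ * δ / 32) ^ 2 * M)
      ≤ 27 * 2 ^ (11 * k + 11) / (M * δ ^ 2) := by
  obtain ⟨i, hi⟩ := Nat.exists_eq_add_of_le hj
  have hsplit : (2:ℝ) ^ (11 * k + 11) = 2 ^ j * 2 ^ i * (2 ^ (2 * k)) ^ 4 * 2 ^ 11 := by
    rw [← pow_mul, ← pow_add, ← pow_add, ← pow_add]
    congr 1
    omega
  have hi1 : (1:ℝ) ≤ 2 ^ i := one_le_pow₀ (by norm_num)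
  rw [hsplit, div_le_div_iff₀ (by positivity) (by positivity)]
  field_simp
  linarith

theorem pt_moment_estimation_AFC_guarantee_general
    {Ω : Type*} [MeasurableSpace Ω] (μ : Measure Ω) [IsProbabilityMeasure μ]
    (α3 β3 : ℝ) (hα : 0 < α3) (hβ : 0 < β3)
    (δ : ℝ) (hδ0 : 0 < δ) (hδ : δ ≤ 1/2)
    (k : ℕ)
    (hkb : Real.log (2 * α3 / δ) / (2 * β3) ≤ (k:ℝ))
    (ptil p PA PB : ℝ) (hp : |p| ≤ 1)
    (hPA : ((2:ℝ) ^ (2 * k))⁻¹ ≤ PA) (hPB : ((2:ℝ) ^ (2 * k))⁻¹ ≤ PB)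
    (happ : |p / (PA * PB) - ptil| ≤ α3 * Real.exp (-(2 * β3 * k)))
    (M : ℝ) (hM : 27 * (2:ℝ) ^ (11 * k + 11) / δ ^ 2 ≤ M)
    (X YA YB : Ω → ℝ)
    (htailX : ∀ α : ℝ, 0 < α →
      μ {ω | α ≤ |X ω - p|} ≤ ENNReal.ofReal (27 * (2:ℝ) ^ (2 * k) / (α ^ 2 * M)))
    (htailA : ∀ α : ℝ, 0 < α →
      μ {ω | α ≤ |YA ω / PA - 1|} ≤ ENNReal.ofReal (27 * (2:ℝ) ^ (3 * k) / (α ^ 2 * M)))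
    (htailB : ∀ α : ℝ, 0 < α →
      μ {ω | α ≤ |YB ω / PB - 1|} ≤ ENNReal.ofReal (27 * (2:ℝ) ^ (3 * k) / (α ^ 2 * M))) :
    μ {ω | δ ≤ |X ω / (YA ω * YB ω) - ptil|}
      ≤ ENNReal.ofReal (81 * (2:ℝ) ^ (11 * k + 11) / (M * δ ^ 2)) := by
  have hM0 : 0 < M := lt_of_lt_of_le (by positivity) hM
  have hc : (0:ℝ) < (2 ^ (2 * k))⁻¹ := by positivity
  have hc1 : ((2:ℝ) ^ (2 * k))⁻¹ ≤ 1 := inv_le_one_of_one_le₀ (one_le_pow₀ (by norm_num))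
  have hbias : |p / (PA * PB) - ptil| ≤ δ / 2 := by
    refine happ.trans (mul_exp_neg_le_of_log_div_le hα (by positivity) ?_)
    rw [div_le_iff₀ (by positivity)] at hkb
    rw [div_div_eq_mul_div, mul_comm α3]
    linarith
  set t : ℝ := (2 ^ (2 * k))⁻¹ * (2 ^ (2 * k))⁻¹ * δ / 32
  have hsub : {ω | δ ≤ |X ω / (YA ω * YB ω) - ptil|} ⊆
      {ω | t ≤ |X ω - p|} ∪ {ω | t ≤ |YA ω / PA - 1|} ∪ {ω | t ≤ |YB ω / PB - 1|} := by
    intro ω hω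
    by_contra hmem
    simp only [Set.mem_union, Set.mem_ofPred_eq, not_or, not_le] at hmem hω
    obtain ⟨⟨hx, ha⟩, hb⟩ := hmem
    exact hω.not_gt (abs_div_mul_sub_lt_of_abs_sub_lt hp hc hc hPA hPB (by nlinarith) hbias hx ha hb)
  set B := ENNReal.ofReal (27 * 2 ^ (11 * k + 11) / (M * δ ^ 2))
  have hterm : ∀ j ≤ 3 * k, ENNReal.ofReal (27 * 2 ^ j / (t ^ 2 * M)) ≤ B := fun j hj =>
    ENNReal.ofReal_le_ofReal (tail_bound_at_threshold_le hM0 hδ0 hj)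
  have ht0 : 0 < t := by positivity
  calc μ {ω | δ ≤ |X ω / (YA ω * YB ω) - ptil|}
      ≤ μ {ω | t ≤ |X ω - p|} + μ {ω | t ≤ |YA ω / PA - 1|} + μ {ω | t ≤ |YB ω / PB - 1|} :=
        (measure_mono hsub).trans <| (measure_union_le _ _).trans <| by
          gcongr; exact measure_union_le _ _
    _ ≤ B + B + B := by
        gcongr
        · exact (htailX t ht0).trans (hterm _ (by omega))
        · exact (htailA t ht0).trans (hterm _ le_rfl)
        · exact (htailB t ht0).trans (hterm _ le_rfl)
    _ = ENNReal.ofReal (81 * 2 ^ (11 * k + 11) / (M * δ ^ 2)) := by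
        rw [← ENNReal.ofReal_add (by positivity) (by positivity),
          ← ENNReal.ofReal_add (by positivity) (by positivity)]
        ring_nf

/-- Full statistical guarantee for the normalized third PT-moment estimator
of a state satisfying the approximate factorization conditions:
`Pr( |S − p̃| ≥ δ ) ≤ 81 · 2^{11k+11} / (M δ²)`. -/
theorem pt_moment_estimation_AFC_guarantee
    {Ω : Type*} [MeasurableSpace Ω] (μ : Measure Ω) [IsProbabilityMeasure μ]
    (α3 β3 : ℝ) (hα : 0 < α3) (hβ : 0 < β3)
    (δ : ℝ) (hδ0 : 0 < δ) (hδ : δ ≤ 1/2)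
    (k : ℕ) (hk : 1 ≤ k)
    (hkb : Real.log (2 * α3 / δ) / (2 * β3) ≤ (k:ℝ))
    (ptil p PA PB : ℝ) (hp : |p| ≤ 1)
    (hPA : ((2:ℝ) ^ (2 * k))⁻¹ ≤ PA) (hPB : ((2:ℝ) ^ (2 * k))⁻¹ ≤ PB)
    (happ : |p / (PA * PB) - ptil| ≤ α3 * Real.exp (-(2 * β3 * k)))
    (M : ℝ) (hM : 27 * (2:ℝ) ^ (11 * k + 11) / δ ^ 2 ≤ M)
    (X YA YB : Ω → ℝ)
    (hXm : Measurable X) (hYAm : Measurable YA) (hYBm : Measurable YB)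
    (hind : iIndepFun ![X, YA, YB] μ)
    (htailX : ∀ α : ℝ, 0 < α →
      μ {ω | α ≤ |X ω - p|} ≤ ENNReal.ofReal (27 * (2:ℝ) ^ (2 * k) / (α ^ 2 * M)))
    (htailA : ∀ α : ℝ, 0 < α →
      μ {ω | α ≤ |YA ω / PA - 1|} ≤ ENNReal.ofReal (27 * (2:ℝ) ^ (3 * k) / (α ^ 2 * M)))
    (htailB : ∀ α : ℝ, 0 < α →
      μ {ω | α ≤ |YB ω / PB - 1|} ≤ ENNReal.ofReal (27 * (2:ℝ) ^ (3 * k) / (α ^ 2 * M))) :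
    μ {ω | δ ≤ |X ω / (YA ω * YB ω) - ptil|}
      ≤ ENNReal.ofReal (81 * (2:ℝ) ^ (11 * k + 11) / (M * δ ^ 2)) :=
  pt_moment_estimation_AFC_guarantee_general μ α3 β3 hα hβ δ hδ0 hδ k hkb ptil p PA PB hp hPA hPB
    happ M hM X YA YB htailX htailA htailB
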